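/- Powers-Størmer inequality: for positive semidefinite matrices A and B, ‖√A − √B‖_F² ≤ ‖A − B‖_tr, where ‖·‖_tr denotes the trace norm (sum of singular values). -/

import Mathlib

open Matrix BigOperators
open scoped Classical

/-- Frobenius norm of a real matrix. -/
noncomputable def frobNorm {d : ℕ} (M : Matrix (Fin d) (Fin d) ℝ) : ℝ :=
  Real.sqrt (∑ i, ∑ j, (M i j) ^ 2)

/-- Euclidean norm of the half-vectorization (upper-triangular entries incl. diagonal). -/
noncomputable def vechNorm {d : ℕ} (M : Matrix (Fin d) (Fin d) ℝ) : ℝ :=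
  Real.sqrt (∑ i, ∑ j, if i ≤ j then (M i j) ^ 2 else 0)

/-- The positive-semidefinite matrix square root (0 if the input is not PSD). -/
noncomputable def sqrtm {d : ℕ} (M : Matrix (Fin d) (Fin d) ℝ) : Matrix (Fin d) (Fin d) ℝ :=
  if h : M.PosSemidef then
    (h.1.eigenvectorUnitary : Matrix (Fin d) (Fin d) ℝ) *
      diagonal ((RCLike.ofReal : ℝ → ℝ) ∘ Real.sqrt ∘ h.1.eigenvalues) *
      (star h.1.eigenvectorUnitary : Matrix (Fin d) (Fin d) ℝ)
  else 0

/-- Bures–Wasserstein distance between SPD matrices. -/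
noncomputable def bwDist {d : ℕ} (A B : Matrix (Fin d) (Fin d) ℝ) : ℝ :=
  Real.sqrt (A.trace + B.trace - 2 * (sqrtm (sqrtm A * B * sqrtm A)).trace)

/-- Trace norm (nuclear norm) of a real matrix. -/
noncomputable def traceNorm {d : ℕ} (M : Matrix (Fin d) (Fin d) ℝ) : ℝ :=
  (sqrtm (Mᵀ * M)).trace

section SqrtmHelpers
open scoped MatrixOrder

lemma sqrtm_eq_csqrt {d : ℕ} {M : Matrix (Fin d) (Fin d) ℝ} (hM : M.PosSemidef) :
    sqrtm M = CFC.sqrt M := by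
  rw [sqrtm, dif_pos hM, CFC.sqrt_eq_cfc, cfc_nnreal_eq_real _ M, hM.1.cfc_eq]
  simp only [IsHermitian.cfc, Unitary.conjStarAlgAut_apply]
  congr 2
  congr 1
  funext i
  simp [Real.coe_toNNReal', max_eq_left (hM.eigenvalues_nonneg i)]

lemma sqrtm_psd {d : ℕ} {M : Matrix (Fin d) (Fin d) ℝ} (hM : M.PosSemidef) :
    (sqrtm M).PosSemidef := by
  rw [sqrtm_eq_csqrt hM]; exact (CFC.sqrt_nonneg M).posSemidef

lemma sqrtm_mul_self {d : ℕ} {M : Matrix (Fin d) (Fin d) ℝ} (hM : M.PosSemidef) :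
    sqrtm M * sqrtm M = M := by
  rw [sqrtm_eq_csqrt hM]; exact CFC.sqrt_mul_sqrt_self M hM.nonneg

lemma eq_sqrtm_of_sq_eq {d : ℕ} {X N : Matrix (Fin d) (Fin d) ℝ} (hX : X.PosSemidef)
    (hN : N.PosSemidef) (h : X ^ 2 = N) : X = sqrtm N := by
  rw [sqrtm_eq_csqrt hN]; exact (CFC.sqrt_unique (by rw [← h, sq]) hX.nonneg).symm

end SqrtmHelpers

section PSHelpers

variable {d : ℕ}

lemma conj_mul_conj (U : Matrix (Fin d) (Fin d) ℝ) (hU : star U * U = 1)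
    (c c' : Fin d → ℝ) :
    (U * Matrix.diagonal c * star U) * (U * Matrix.diagonal c' * star U)
      = U * Matrix.diagonal (fun i => c i * c' i) * star U := by
  have h : Matrix.diagonal c * Matrix.diagonal c' = Matrix.diagonal (fun i => c i * c' i) := by
    rw [Matrix.diagonal_mul_diagonal]
  calc (U * Matrix.diagonal c * star U) * (U * Matrix.diagonal c' * star U)
      = U * Matrix.diagonal c * (star U * U) * Matrix.diagonal c' * star U := by
        simp only [Matrix.mul_assoc]
    _ = U * (Matrix.diagonal c * Matrix.diagonal c') * star U := by
        rw [hU]; simp only [Matrix.mul_assoc, Matrix.one_mul]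
    _ = U * Matrix.diagonal (fun i => c i * c' i) * star U := by rw [h]

lemma trace_conj (U : Matrix (Fin d) (Fin d) ℝ) (hU : star U * U = 1) (c : Fin d → ℝ) :
    (U * Matrix.diagonal c * star U).trace = ∑ i, c i := by
  rw [Matrix.trace_mul_comm, ← Matrix.mul_assoc, hU, Matrix.one_mul, Matrix.trace_diagonal]

lemma trace_diagonal_mul (c : Fin d → ℝ) (N : Matrix (Fin d) (Fin d) ℝ) :
    (Matrix.diagonal c * N).trace = ∑ i, c i * N i i := by
  simp [Matrix.trace, Matrix.diag, Matrix.diagonal_mul]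

lemma trace_conj_mul (U : Matrix (Fin d) (Fin d) ℝ)
    (c : Fin d → ℝ) (N : Matrix (Fin d) (Fin d) ℝ) :
    (U * Matrix.diagonal c * star U * N).trace = ∑ i, c i * (star U * N * U) i i := by
  have h : U * Matrix.diagonal c * star U * N = U * (Matrix.diagonal c * (star U * N)) := by
    simp only [Matrix.mul_assoc]
  rw [h, Matrix.trace_mul_comm]
  rw [show Matrix.diagonal c * (star U * N) * U = Matrix.diagonal c * (star U * N * U) by
    simp only [Matrix.mul_assoc]]
  exact trace_diagonal_mul _ _

lemma psd_conj (U : Matrix (Fin d) (Fin d) ℝ) (c : Fin d → ℝ) (hc : ∀ i, 0 ≤ c i) :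
    (U * Matrix.diagonal c * star U).PosSemidef := by
  have h := (Matrix.PosSemidef.diagonal (R := ℝ) (n := Fin d) hc).mul_mul_conjTranspose_same U
  rwa [Matrix.star_eq_conjTranspose]

lemma psd_diag_nonneg {N : Matrix (Fin d) (Fin d) ℝ} (hN : N.PosSemidef) (i : Fin d) :
    0 ≤ N i i := by
  exact hN.diag_nonneg

lemma unitary_col_sq (C : Matrix (Fin d) (Fin d) ℝ) (hC : star C * C = 1) (i : Fin d) :
    ∑ j, (C j i) ^ 2 = 1 := by
  have h := congrFun (congrFun hC i) i
  simp only [Matrix.mul_apply, Matrix.one_apply_eq, Matrix.star_apply, star_trivial] at h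
  calc ∑ j, (C j i)^2 = ∑ j, C j i * C j i := by simp [sq]
  _ = 1 := h

lemma spectral_real {M : Matrix (Fin d) (Fin d) ℝ} (hM : M.IsHermitian) :
    M = (hM.eigenvectorUnitary : Matrix (Fin d) (Fin d) ℝ) * Matrix.diagonal hM.eigenvalues
        * star (hM.eigenvectorUnitary : Matrix (Fin d) (Fin d) ℝ) := by
  have h := hM.spectral_theorem
  simpa using h

lemma diag_real {M : Matrix (Fin d) (Fin d) ℝ} (hM : M.IsHermitian) :
    star (hM.eigenvectorUnitary : Matrix (Fin d) (Fin d) ℝ) * M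
        * (hM.eigenvectorUnitary : Matrix (Fin d) (Fin d) ℝ)
      = Matrix.diagonal hM.eigenvalues := by
  have h := hM.conjStarAlgAut_star_eigenvectorUnitary
  simpa [Unitary.conjStarAlgAut_star_apply] using h

lemma unit1 {M : Matrix (Fin d) (Fin d) ℝ} (hM : M.IsHermitian) :
    star (hM.eigenvectorUnitary : Matrix (Fin d) (Fin d) ℝ)
      * (hM.eigenvectorUnitary : Matrix (Fin d) (Fin d) ℝ) = 1 :=
  Unitary.coe_star_mul_self _

lemma unit2 {M : Matrix (Fin d) (Fin d) ℝ} (hM : M.IsHermitian) :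
    (hM.eigenvectorUnitary : Matrix (Fin d) (Fin d) ℝ)
      * star (hM.eigenvectorUnitary : Matrix (Fin d) (Fin d) ℝ) = 1 :=
  Unitary.coe_mul_star_self _

end PSHelpers

/-- Powers–Størmer inequality: ‖√A − √B‖_F² ≤ ‖A − B‖_tr for PSD A, B. -/
theorem powers_stormer {d : ℕ} (A B : Matrix (Fin d) (Fin d) ℝ)
    (hA : A.PosSemidef) (hB : B.PosSemidef) :
    frobNorm (sqrtm A - sqrtm B) ^ 2 ≤ traceNorm (A - B) := by
  classical
  set P := sqrtm A with hPs
  set Q := sqrtm B with hQs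
  have hP : P.PosSemidef := sqrtm_psd hA
  have hQ : Q.PosSemidef := sqrtm_psd hB
  have hPP : P * P = A := sqrtm_mul_self hA
  have hQQ : Q * Q = B := sqrtm_mul_self hB
  set D := P - Q with hDdef
  set S := P + Q with hSdef
  set H := A - B with hHdef
  have hD : D.IsHermitian := hP.1.sub hQ.1
  have hH : H.IsHermitian := hA.1.sub hB.1
  set U : Matrix (Fin d) (Fin d) ℝ := (hD.eigenvectorUnitary : Matrix (Fin d) (Fin d) ℝ)
    with hUdef
  set lam := hD.eigenvalues with hlamdef
  set W : Matrix (Fin d) (Fin d) ℝ := (hH.eigenvectorUnitary : Matrix (Fin d) (Fin d) ℝ)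
    with hWdef
  set mu := hH.eigenvalues with hmudef
  have hU1 : star U * U = 1 := unit1 hD
  have hU2 : U * star U = 1 := unit2 hD
  have hW1 : star W * W = 1 := unit1 hH
  have hW2 : W * star W = 1 := unit2 hH
  have hDspec : D = U * Matrix.diagonal lam * star U := spectral_real hD
  have hHspec : H = W * Matrix.diagonal mu * star W := spectral_real hH
  -- the sign function
  set sg : ℝ → ℝ := fun x => if x < 0 then -1 else 1 with hsgdef
  have hsg_mul : ∀ x : ℝ, sg x * x = |x| := by
    intro x
    rcases lt_or_ge x 0 with h | h
    · simp only [hsgdef, if_pos h, abs_of_neg h]; ring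
    · simp only [hsgdef, if_neg (not_lt.mpr h), abs_of_nonneg h, one_mul]
  have hsg_mul' : ∀ x : ℝ, x * sg x = |x| := fun x => by rw [mul_comm]; exact hsg_mul x
  have hsg_abs : ∀ x : ℝ, |sg x| = 1 := by
    intro x
    rcases lt_or_ge x 0 with h | h
    · simp [hsgdef, if_pos h]
    · simp [hsgdef, if_neg (not_lt.mpr h)]
  -- Step A : traceNorm H = ∑ |mu i|
  have hHT : Hᵀ = H := by
    have h := hH
    rw [Matrix.IsHermitian, Matrix.conjTranspose] at h
    exact (show H.IsSymm by simpa [Matrix.conjTranspose] using hH)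
  have habsH : (W * Matrix.diagonal (fun i => |mu i|) * star W).PosSemidef :=
    psd_conj W _ (fun i => abs_nonneg _)
  have hsqH : (W * Matrix.diagonal (fun i => |mu i|) * star W) ^ 2 = Hᵀ * H := by
    rw [sq, conj_mul_conj W hW1, hHT]
    conv_rhs => rw [hHspec]
    rw [conj_mul_conj W hW1]
    simp only [abs_mul_abs_self]
  have hPSDHTH : (Hᵀ * H).PosSemidef := hsqH ▸ (habsH.pow 2)
  have htn : traceNorm H = ∑ i, |mu i| := by
    rw [traceNorm, ← eq_sqrtm_of_sq_eq habsH hPSDHTH hsqH, trace_conj W hW1]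
  -- Step B : frobNorm D ^ 2 = ∑ lam i ^ 2
  have hsymm : ∀ i j, D j i = D i j := by
    intro i j
    have h := hD.apply i j
    simpa using h
  have hfr : frobNorm D ^ 2 = ∑ i, lam i ^ 2 := by
    have h1 : frobNorm D ^ 2 = ∑ i, ∑ j, (D i j) ^ 2 := by
      rw [frobNorm, Real.sq_sqrt]
      positivity
    have h2 : ∑ i, ∑ j, (D i j) ^ 2 = (D * D).trace := by
      rw [Matrix.trace]
      refine Finset.sum_congr rfl fun i _ => ?_
      simp only [Matrix.diag_apply, Matrix.mul_apply]
      refine Finset.sum_congr rfl fun j _ => ?_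
      rw [sq, hsymm i j]
    have h3 : (D * D).trace = ∑ i, lam i ^ 2 := by
      conv_lhs => rw [hDspec]
      rw [conj_mul_conj U hU1, trace_conj U hU1]
      refine Finset.sum_congr rfl fun i _ => (sq (lam i)).symm
    rw [h1, h2, h3]
  -- Step C : |lam i| ≤ (star U * S * U) i i
  have hPc : (star U * P * U).PosSemidef := by
    rw [Matrix.star_eq_conjTranspose]; exact hP.conjTranspose_mul_mul_same U
  have hQc : (star U * Q * U).PosSemidef := by
    rw [Matrix.star_eq_conjTranspose]; exact hQ.conjTranspose_mul_mul_same U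
  have hdiagD : star U * D * U = Matrix.diagonal lam := diag_real hD
  have hlam_eq : ∀ i, (star U * D * U) i i = lam i := by
    intro i; rw [hdiagD]; simp
  have hSbound : ∀ i, |lam i| ≤ (star U * S * U) i i := by
    intro i
    have hp := psd_diag_nonneg hPc i
    have hq := psd_diag_nonneg hQc i
    have hd : (star U * D * U) i i
        = (star U * P * U) i i - (star U * Q * U) i i := by
      rw [hDdef]
      simp [Matrix.mul_sub, Matrix.sub_mul]
    have hs : (star U * S * U) i i
        = (star U * P * U) i i + (star U * Q * U) i i := by
      rw [hSdef]
      simp [Matrix.mul_add, Matrix.add_mul]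
    rw [hs, ← hlam_eq i, hd]
    calc |(star U * P * U) i i - (star U * Q * U) i i|
        ≤ |(star U * P * U) i i| + |(star U * Q * U) i i| := abs_sub _ _
      _ = (star U * P * U) i i + (star U * Q * U) i i := by
          rw [abs_of_nonneg hp, abs_of_nonneg hq]
  -- Step D+E : ∑ lam i ^ 2 ≤ trace (absD * S)
  have hDE : ∑ i, lam i ^ 2
      ≤ (U * Matrix.diagonal (fun i => |lam i|) * star U * S).trace := by
    rw [trace_conj_mul U]
    refine Finset.sum_le_sum fun i _ => ?_
    calc lam i ^ 2 = |lam i| * |lam i| := by rw [← abs_mul, abs_mul_self, sq]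
      _ ≤ |lam i| * (star U * S * U) i i :=
          mul_le_mul_of_nonneg_left (hSbound i) (abs_nonneg _)
  -- Step F : trace (absD * S) = trace (V * H)
  set V := U * Matrix.diagonal (fun i => sg (lam i)) * star U with hVdef
  set absD := U * Matrix.diagonal (fun i => |lam i|) * star U with habsDdef
  have hVD : V * D = absD := by
    rw [hVdef, habsDdef]
    conv_lhs => rw [hDspec]
    rw [conj_mul_conj U hU1]
    simp only [hsg_mul]
  have hDV : D * V = absD := by
    rw [hVdef, habsDdef]
    conv_lhs => rw [hDspec]
    rw [conj_mul_conj U hU1]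
    simp only [hsg_mul']
  have h2H : D * S + S * D = H + H := by
    rw [hDdef, hSdef, hHdef, ← hPP, ← hQQ]
    rw [Matrix.sub_mul, Matrix.add_mul, Matrix.mul_add, Matrix.mul_add, Matrix.mul_sub,
      Matrix.mul_sub]
    abel
  have hF : (V * H).trace = (absD * S).trace := by
    have h1 : (V * (D * S)).trace = (absD * S).trace := by
      rw [← Matrix.mul_assoc, hVD]
    have h2 : (V * (S * D)).trace = (absD * S).trace := by
      rw [← Matrix.mul_assoc, Matrix.trace_mul_comm, ← Matrix.mul_assoc, hDV]
    have h3 : (V * (D * S)).trace + (V * (S * D)).trace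
        = (V * H).trace + (V * H).trace := by
      rw [← Matrix.trace_add, ← Matrix.mul_add, h2H, Matrix.mul_add, Matrix.trace_add]
    linarith
  -- Step G : trace (V * H) ≤ ∑ |mu i|
  have hVH : (V * H).trace = ∑ i, mu i * (star W * V * W) i i := by
    rw [Matrix.trace_mul_comm]
    conv_lhs => rw [hHspec]
    rw [trace_conj_mul W]
  set C := star U * W with hCdef
  have hCstar : star C = star W * U := by
    rw [hCdef, Matrix.star_mul, star_star]
  have hC1 : star C * C = 1 := by
    rw [hCstar, hCdef]
    calc star W * U * (star U * W) = star W * (U * star U) * W := by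
          simp only [Matrix.mul_assoc]
      _ = 1 := by rw [hU2, Matrix.mul_one, hW1]
  have hWVW : star W * V * W = star C * Matrix.diagonal (fun j => sg (lam j)) * C := by
    rw [hVdef, hCstar, hCdef]
    simp only [Matrix.mul_assoc]
  have hbound : ∀ i, |(star W * V * W) i i| ≤ 1 := by
    intro i
    have hentry : (star W * V * W) i i = ∑ j, sg (lam j) * (C j i) ^ 2 := by
      rw [hWVW]
      rw [show star C * Matrix.diagonal (fun j => sg (lam j)) * C
          = star C * (Matrix.diagonal (fun j => sg (lam j)) * C) by
        simp only [Matrix.mul_assoc]]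
      rw [Matrix.mul_apply]
      refine Finset.sum_congr rfl fun j _ => ?_
      rw [Matrix.diagonal_mul, Matrix.star_apply, star_trivial]
      ring
    rw [hentry]
    calc |∑ j, sg (lam j) * (C j i) ^ 2| ≤ ∑ j, |sg (lam j) * (C j i) ^ 2| :=
          Finset.abs_sum_le_sum_abs _ _
      _ = ∑ j, (C j i) ^ 2 := by
          refine Finset.sum_congr rfl fun j _ => ?_
          rw [abs_mul, hsg_abs, one_mul, abs_of_nonneg (sq_nonneg _)]
      _ = 1 := unitary_col_sq C hC1 i
  have hG : (V * H).trace ≤ ∑ i, |mu i| := by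
    rw [hVH]
    refine Finset.sum_le_sum fun i _ => ?_
    calc mu i * (star W * V * W) i i ≤ |mu i * (star W * V * W) i i| := le_abs_self _
      _ = |mu i| * |(star W * V * W) i i| := abs_mul _ _
      _ ≤ |mu i| * 1 := mul_le_mul_of_nonneg_left (hbound i) (abs_nonneg _)
      _ = |mu i| := mul_one _
  -- Conclusion
  rw [hfr, htn]
  calc ∑ i, lam i ^ 2 ≤ (absD * S).trace := hDE
    _ = (V * H).trace := hF.symm
    _ ≤ ∑ i, |mu i| := hG
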